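/- Let K₁ and K₂ be compact subsets of C(Σ, M) consisting entirely of nonconstant maps. Then there exist open sets U₁ ⊇ K₁ and U₂ ⊇ K₂ in C(Σ, M) and a compact subset K of ℂ not containing 0 such that the set { a ∈ ℂ : a ≠ 0 and there exists h ∈ U₁ with h ∘ g_a ∈ U₂ } is contained in K. (Equivalent reformulation (B) of the main properness theorem, for compact sets of maps.) -/

import Mathlib

/-!
A compact family of nonconstant maps oscillates uniformly: each member varies by at least `ε` on
a fixed disc `‖z‖ < R`; a compact family is also equicontinuous at `0`. If `h` is close to some
`f ∈ K₁` and `h ∘ g_a` is close to some `k ∈ K₂` with `a` small, then `h ∘ g_a` on the disc only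
samples `h`, hence `f`, on the tiny disc `‖z‖ < ‖a‖ R`, where `f` is nearly constant, contradicting
the oscillation of `k`. So `‖a‖` is bounded below; applying the same argument to `g_a⁻¹` with the
roles of `K₁` and `K₂` swapped bounds `‖a‖` above.
-/

open OnePoint

/-- The reparametrization `g_a : Σ → Σ` of the Riemann sphere `Σ = OnePoint ℂ`
extending `z ↦ a · z` on `ℂ` and fixing the point at infinity. -/
noncomputable def gA (a : ℂ) (ha : a ≠ 0) : C(OnePoint ℂ, OnePoint ℂ) where
  toFun := OnePoint.map (fun z => a * z)
  continuous_toFun := (Homeomorph.onePointCongr (Homeomorph.mulLeft₀ a ha)).continuous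

open Filter Topology Metric

lemma gA_coe {a : ℂ} (ha : a ≠ 0) (z : ℂ) : gA a ha z = ↑(a * z) := rfl

lemma comp_gA_comp_gA_inv {M : Type*} [TopologicalSpace M] (h : C(OnePoint ℂ, M)) {a : ℂ}
    (ha : a ≠ 0) : (h.comp (gA a ha)).comp (gA a⁻¹ (inv_ne_zero ha)) = h := by
  ext x
  induction x using OnePoint.rec with
  | infty => rfl
  | coe z => exact congrArg (h ∘ (↑)) (mul_inv_cancel_left₀ ha z)

theorem IsCompact.eventually_forall_dist_apply_lt {X M : Type*} [TopologicalSpace X]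
    [LocallyCompactSpace X] [MetricSpace M] {K : Set C(X, M)} (hK : IsCompact K) (x₀ : X)
    {ε : ℝ} (hε : 0 < ε) : ∀ᶠ x in 𝓝 x₀, ∀ f ∈ K, dist (f x) (f x₀) < ε := by
  refine hK.eventually_forall_of_forall_eventually fun f _ => ?_
  have hcont : Continuous fun p : X × C(X, M) => dist (p.2 p.1) (p.2 x₀) :=
    (continuous_eval.comp continuous_swap).dist (continuous_eval_const x₀ |>.comp continuous_snd)
  exact hcont.continuousAt.eventually_lt continuous_const.continuousAt (by simpa using hε)

lemma exists_apply_coe_ne_apply_coe {X M : Type*} [TopologicalSpace X] [NoncompactSpace X]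
    [TopologicalSpace M] [T2Space M] (f : C(OnePoint X, M)) {x y : OnePoint X} (hxy : f x ≠ f y) :
    ∃ x' y' : X, f x' ≠ f y' := by
  by_contra! hconst
  obtain ⟨x₀, -⟩ : (Set.univ : Set X).Nonempty :=
    Set.nonempty_iff_ne_empty.2 fun h => noncompact_univ X (h ▸ isCompact_empty)
  have : (f : OnePoint X → M) = fun _ => f x₀ :=
    Continuous.ext_on denseRange_coe f.continuous continuous_const
      (by rintro _ ⟨z, rfl⟩; exact hconst z x₀)
  exact hxy (by rw [this])

theorem IsCompact.exists_uniform_oscillation {M : Type*} [MetricSpace M]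
    {K : Set C(OnePoint ℂ, M)} (hK : IsCompact K) (hnc : ∀ f ∈ K, ∃ x y, f x ≠ f y) :
    ∃ ε > 0, ∃ R > 0, ∀ k ∈ K, ∃ x y : ℂ, ‖x‖ < R ∧ ‖y‖ < R ∧ ε < dist (k x) (k y) := by
  let W : ℕ → Set C(OnePoint ℂ, M) := fun n =>
    ⋃ x ∈ ball (0 : ℂ) (n + 1), ⋃ y ∈ ball (0 : ℂ) (n + 1), {k | 1 / (n + 1) < dist (k x) (k y)}
  have hW_open (n : ℕ) : IsOpen (W n) :=
    isOpen_biUnion fun x _ => isOpen_biUnion fun y _ =>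
      isOpen_lt continuous_const ((continuous_eval_const _).dist (continuous_eval_const _))
  have hW_mono : Monotone W := by
    intro m n hmn
    have hmn' : (m + 1 : ℝ) ≤ n + 1 := by gcongr
    refine Set.biUnion_mono (ball_subset_ball hmn') fun x _ =>
      Set.biUnion_mono (ball_subset_ball hmn') fun y _ k hk => ?_
    exact (one_div_le_one_div_of_le (by positivity) hmn').trans_lt hk
  have hW_cover : K ⊆ ⋃ n, W n := by
    intro k hk
    obtain ⟨x₁, y₁, h₁⟩ := hnc k hk
    obtain ⟨x, y, hxy⟩ := exists_apply_coe_ne_apply_coe k h₁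
    have hd : 0 < dist (k x) (k y) := dist_pos.2 hxy
    obtain ⟨n, hn⟩ := exists_nat_gt (max (max ‖x‖ ‖y‖) (1 / dist (k x) (k y)))
    simp only [max_lt_iff] at hn
    refine Set.mem_iUnion.2 ⟨n, Set.mem_biUnion (x := x) ?_ (Set.mem_biUnion (x := y) ?_ ?_)⟩
    · rw [mem_ball_zero_iff]; linarith
    · rw [mem_ball_zero_iff]; linarith
    · exact (one_div_lt hd (by positivity)).1 (by linarith)
  obtain ⟨n, hn⟩ := hK.elim_directed_cover W hW_open hW_cover hW_mono.directed_le
  refine ⟨1 / (n + 1), by positivity, n + 1, by positivity, fun k hk => ?_⟩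
  have hkW := hn hk
  simp only [W, Set.mem_iUnion, Set.mem_ofPred_eq, mem_ball_zero_iff, exists_prop] at hkW
  obtain ⟨x, hx, y, hy, hxy⟩ := hkW
  exact ⟨x, y, hx, hy, hxy⟩

lemma dist_apply_le_dist_comp_add {X Y M : Type*} [TopologicalSpace X] [CompactSpace X]
    [TopologicalSpace Y] [CompactSpace Y] [MetricSpace M] (f h : C(Y, M)) (g : C(X, Y))
    (k : C(X, M)) (x y : X) :
    dist (k x) (k y) ≤ dist (f (g x)) (f (g y)) + 2 * dist h f + 2 * dist (h.comp g) k := by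
  have hkh (z : X) : dist (k z) (h (g z)) ≤ dist (h.comp g) k := by
    rw [dist_comm]; exact ContinuousMap.dist_apply_le_dist (f := h.comp g) z
  have hhf (z : X) : dist (h (g z)) (f (g z)) ≤ dist h f := ContinuousMap.dist_apply_le_dist _
  calc dist (k x) (k y)
      ≤ dist (k x) (h (g x)) + dist (h (g x)) (f (g x)) + dist (f (g x)) (f (g y))
        + (dist (f (g y)) (h (g y)) + dist (h (g y)) (k y)) :=
        (dist_triangle _ _ _).trans (add_le_add (dist_triangle4 _ _ _ _) (dist_triangle _ _ _))
    _ ≤ _ := by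
        rw [dist_comm (f (g y)) (h (g y)), dist_comm (h (g y)) (k y)]
        linarith [hkh x, hkh y, hhf x, hhf y]

lemma exists_comp_gA_notMem_thickening {M : Type*} [MetricSpace M]
    {K₁ K₂ : Set C(OnePoint ℂ, M)} (hK₁ : IsCompact K₁) (hK₂ : IsCompact K₂)
    (hnc₂ : ∀ f ∈ K₂, ∃ x y, f x ≠ f y) :
    ∃ τ > 0, ∃ r > 0, ∀ a (ha : a ≠ 0), ‖a‖ < r →
      ∀ h ∈ thickening τ K₁, h.comp (gA a ha) ∉ thickening τ K₂ := by
  obtain ⟨ε, hε, R, hR, hosc⟩ := hK₂.exists_uniform_oscillation hnc₂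
  obtain ⟨δ, hδ, hequi⟩ := eventually_nhds_iff_ball.1 <|
    OnePoint.continuous_coe.continuousAt.eventually
      (hK₁.eventually_forall_dist_apply_lt _ (by positivity : 0 < ε / 4))
  refine ⟨ε / 8, by positivity, δ / R, by positivity, fun a ha har h hh hcomp => ?_⟩
  obtain ⟨f, hf, hhf⟩ := mem_thickening_iff.1 hh
  obtain ⟨k, hk, hhk⟩ := mem_thickening_iff.1 hcomp
  obtain ⟨x, y, hx, hy, hxy⟩ := hosc k hk
  have hsmall {z : ℂ} (hz : ‖z‖ < R) : dist (f ↑(a * z)) (f ↑(0 : ℂ)) < ε / 4 := by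
    refine hequi (a * z) ?_ f hf
    rw [mem_ball_zero_iff, norm_mul]
    calc ‖a‖ * ‖z‖ ≤ ‖a‖ * R := by gcongr
      _ < δ := (lt_div_iff₀ hR).1 har
  have hkey := dist_apply_le_dist_comp_add f h (gA a ha) k x y
  rw [gA_coe, gA_coe] at hkey
  linarith [dist_triangle_right (f ↑(a * x)) (f ↑(a * y)) (f ↑(0 : ℂ)), hsmall hx, hsmall hy]

theorem group_part_precompact_of_compact_general {M : Type*} [MetricSpace M]
    (K₁ K₂ : Set C(OnePoint ℂ, M)) (hK₁ : IsCompact K₁) (hK₂ : IsCompact K₂)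
    (hnc₁ : ∀ f ∈ K₁, ∃ x y, f x ≠ f y) (hnc₂ : ∀ f ∈ K₂, ∃ x y, f x ≠ f y) :
    ∃ U₁ U₂ : Set C(OnePoint ℂ, M), IsOpen U₁ ∧ IsOpen U₂ ∧ K₁ ⊆ U₁ ∧ K₂ ⊆ U₂ ∧
      ∃ K : Set ℂ, IsCompact K ∧ (0 : ℂ) ∉ K ∧
        {a : ℂ | ∃ ha : a ≠ 0, ∃ h ∈ U₁, h.comp (gA a ha) ∈ U₂} ⊆ K := by
  obtain ⟨τ₁, hτ₁, r₁, hr₁, hsmall⟩ := exists_comp_gA_notMem_thickening hK₁ hK₂ hnc₂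
  obtain ⟨τ₂, hτ₂, r₂, hr₂, hlarge⟩ := exists_comp_gA_notMem_thickening hK₂ hK₁ hnc₁
  set τ := min τ₁ τ₂
  have hτ : 0 < τ := lt_min hτ₁ hτ₂
  have h₁ (K : Set C(OnePoint ℂ, M)) := thickening_mono (min_le_left τ₁ τ₂) K
  have h₂ (K : Set C(OnePoint ℂ, M)) := thickening_mono (min_le_right τ₁ τ₂) K
  refine ⟨thickening τ K₁, thickening τ K₂, isOpen_thickening, isOpen_thickening,
    self_subset_thickening hτ K₁, self_subset_thickening hτ K₂,
    closedBall 0 r₂⁻¹ \ ball 0 r₁, (isCompact_closedBall _ _).diff isOpen_ball,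
    fun h => h.2 (mem_ball_self hr₁), ?_⟩
  rintro a ⟨ha, h, hh, hha⟩
  refine ⟨mem_closedBall_zero_iff.2 (not_lt.1 fun ha_large => ?_),
    fun ha_small => hsmall a ha (mem_ball_zero_iff.1 ha_small) h (h₁ K₁ hh) (h₁ K₂ hha)⟩
  have ha_inv : ‖a⁻¹‖ < r₂ := by
    rw [norm_inv]; exact inv_lt_of_inv_lt₀ hr₂ ha_large
  refine hlarge a⁻¹ (inv_ne_zero ha) ha_inv _ (h₂ K₂ hha) ?_
  rw [comp_gA_comp_gA_inv]
  exact h₂ K₁ hh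

/-- Reformulation (B) of the main properness theorem: for compact sets `K₁, K₂` of nonconstant
maps there are open neighbourhoods `U₁ ⊇ K₁`, `U₂ ⊇ K₂` such that the set of group elements
carrying `U₁` into `U₂` is contained in a compact subset of `ℂ* ⊂ ℂ`. -/
theorem group_part_precompact_of_compact {M : Type*} [MetricSpace M] [CompactSpace M]
    (K₁ K₂ : Set C(OnePoint ℂ, M)) (hK₁ : IsCompact K₁) (hK₂ : IsCompact K₂)
    (hnc₁ : ∀ f ∈ K₁, ∃ x y, f x ≠ f y) (hnc₂ : ∀ f ∈ K₂, ∃ x y, f x ≠ f y) :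
    ∃ U₁ U₂ : Set C(OnePoint ℂ, M), IsOpen U₁ ∧ IsOpen U₂ ∧ K₁ ⊆ U₁ ∧ K₂ ⊆ U₂ ∧
      ∃ K : Set ℂ, IsCompact K ∧ (0 : ℂ) ∉ K ∧
        {a : ℂ | ∃ ha : a ≠ 0, ∃ h ∈ U₁, h.comp (gA a ha) ∈ U₂} ⊆ K :=
  group_part_precompact_of_compact_general K₁ K₂ hK₁ hK₂ hnc₁ hnc₂
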